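/- arXiv:2002.06078 — 6 statements merged into one kernel-verified Lean document; each statement's English description precedes it below -/
import Mathlib

section
/- Let G be a finite simple graph on n vertices that admits a join, i.e., V(G) can be partitioned into two nonempty sets V1 and V2 such that every vertex of V1 is adjacent to every vertex of V2. Then G contains an odd set of size at least 2·⌈(n−2)/4⌉; that is, mos(G) ≥ 2·⌈(n−2)/4⌉. -/
/-!
By Gallai's theorem every vertex set splits into a part inducing a graph with all degrees even
and a part inducing one with all degrees odd; by the handshake lemma the odd part has even size.
Apply this to each side `Vᵢ` of the join, after removing at most one vertex so that its size is
odd: it splits into an even part `Xᵢ` of odd size and an odd part `Yᵢ` of even size. Across the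
join every vertex of `X₁ ∪ X₂` gains an odd number of neighbours and every vertex of `Y₁ ∪ Y₂`
an even number, so both unions are odd sets of even size, and together they cover all but at
most two vertices.
-/

/-- A set `S` of vertices of `G` is *odd* if every vertex of `S` has an odd number of
neighbors inside `S`. -/
def SimpleGraph.IsOddSet {V : Type*} (G : SimpleGraph V) (S : Set V) : Prop :=
  ∀ v ∈ S, Odd (S ∩ G.neighborSet v).ncard

open Matrix

theorem Matrix.exists_vecMul_eq_of_forall_mulVec_eq_zero {K m n : Type*} [Field K]
    [Fintype m] [DecidableEq m] [Fintype n] [DecidableEq n] (M : Matrix m n K) (d : n → K)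
    (h : ∀ z, M *ᵥ z = 0 → d ⬝ᵥ z = 0) : ∃ y, y ᵥ* M = d := by
  have hd : dotProductEquiv K n d ∈ (LinearMap.ker M.mulVecLin).dualAnnihilator :=
    (Submodule.mem_dualAnnihilator _).2 fun z hz => h z hz
  rw [← LinearMap.range_dualMap_eq_dualAnnihilator_ker] at hd
  obtain ⟨ψ, hψ⟩ := hd
  set y := (dotProductEquiv K m).symm ψ
  have hy : dotProductEquiv K m y = ψ := LinearEquiv.apply_symm_apply _ _
  refine ⟨y, (dotProductEquiv K n).injective (LinearMap.ext fun x => ?_)⟩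
  rw [← hψ, ← hy]
  simp [dotProduct_mulVec]

theorem Matrix.IsSymm.dotProduct_mulVec_self_eq_zero {R n : Type*} [CommRing R] [CharP R 2]
    [Fintype n] {N : Matrix n n R} (hN : N.IsSymm) (hdiag : N.diag = 0) (z : n → R) :
    z ⬝ᵥ N *ᵥ z = 0 := by
  simp only [dotProduct, mulVec, Finset.mul_sum, ← Fintype.sum_prod_type']
  refine Finset.sum_ninvolution Prod.swap (fun p => ?_) (fun p hp h => hp ?_)
    (fun _ => Finset.mem_univ _) Prod.swap_swap
  · rw [Prod.fst_swap, Prod.snd_swap, hN.apply p.1 p.2,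
      show z p.2 * (N p.1 p.2 * z p.1) = z p.1 * (N p.1 p.2 * z p.2) by ring]
    exact CharTwo.add_self_eq_zero _
  · obtain ⟨i, j⟩ := p
    obtain rfl : j = i := congrArg Prod.fst h
    simp [show N j j = 0 from congrFun hdiag j]

/-- On the kernel of `M`, `diag M ⬝ z = ∑ Mᵢᵢ zᵢ² = z ⬝ M z = 0`, since `zᵢ² = zᵢ` in `𝔽₂`
and the off-diagonal terms of `z ⬝ M z` cancel in pairs. -/
theorem Matrix.IsSymm.exists_vecMul_eq_diag {n : Type*} [Fintype n] [DecidableEq n]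
    {M : Matrix n n (ZMod 2)} (hM : M.IsSymm) : ∃ x, x ᵥ* M = M.diag := by
  refine M.exists_vecMul_eq_of_forall_mulVec_eq_zero _ fun z hz => ?_
  have hoff : z ⬝ᵥ (M - diagonal M.diag) *ᵥ z = 0 :=
    (hM.sub (isSymm_diagonal _)).dotProduct_mulVec_self_eq_zero (by simp) z
  rw [sub_mulVec, dotProduct_sub, hz, dotProduct_zero, zero_sub, neg_eq_zero] at hoff
  rw [← hoff]
  simp only [dotProduct, mulVec_diagonal]
  refine Finset.sum_congr rfl fun i _ => ?_
  rw [mul_left_comm, ← sq, ZMod.pow_card]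

theorem ZMod.eq_indicator_setOf_eq_one {ι : Type*} (x : ι → ZMod 2) :
    x = {i | x i = 1}.indicator 1 := by
  ext i
  rcases (show ∀ a : ZMod 2, a = 0 ∨ a = 1 by decide) (x i) with h | h <;> simp [h]

theorem Set.exists_subset_odd_ncard {α : Type*} {W : Set α} (hW : W.Nonempty) (hfin : W.Finite) :
    ∃ W' ⊆ W, Odd W'.ncard ∧ W.ncard ≤ W'.ncard + 1 := by
  by_cases hodd : Odd W.ncard
  · exact ⟨W, subset_rfl, hodd, Nat.le_succ _⟩
  obtain ⟨w, hw⟩ := hW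
  have hpos : 0 < W.ncard := (Set.ncard_pos hfin).2 ⟨w, hw⟩
  refine ⟨W \ {w}, sdiff_subset, ?_, ?_⟩ <;> rw [Set.ncard_sdiff_singleton_of_mem hw]
  · rw [Nat.not_odd_iff_even] at hodd
    exact Nat.Even.sub_odd hpos hodd odd_one
  · omega

theorem two_mul_ceil_sub_two_div_four_le {n a : ℕ} (ha : Even a) (h : n ≤ 2 * a + 2) :
    2 * ⌈((n : ℚ) - 2) / 4⌉ ≤ (a : ℤ) := by
  obtain ⟨k, rfl⟩ := ha
  have hk : ⌈((n : ℚ) - 2) / 4⌉ ≤ k := by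
    rw [Int.ceil_le, div_le_iff₀ (by norm_num)]
    have : (n : ℚ) ≤ 2 * (k + k) + 2 := by exact_mod_cast h
    push_cast
    linarith
  push_cast
  omega

namespace SimpleGraph

variable {V V' : Type*} {G : SimpleGraph V}

def IsEvenSet_s0 (G : SimpleGraph V) (S : Set V) : Prop :=
  ∀ v ∈ S, Even (S ∩ G.neighborSet v).ncard

theorem ncard_neighborSet [Fintype V] [DecidableRel G.Adj] (v : V) :
    (G.neighborSet v).ncard = G.degree v := by
  rw [Set.ncard_eq_toFinset_card', Set.toFinset_card, card_neighborSet_eq_degree]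

theorem adjMatrix_vecMul_indicator_apply {R : Type*} [NonAssocSemiring R] [Fintype V]
    [DecidableRel G.Adj] (S : Set V) (v : V) :
    (S.indicator 1 ᵥ* G.adjMatrix R) v = ((S ∩ G.neighborSet v).ncard : R) := by
  classical
  rw [adjMatrix_vecMul_apply, Finset.sum_indicator_eq_sum_filter]
  simp only [Pi.one_apply, Finset.sum_const, nsmul_one]
  rw [← Set.ncard_coe_finset]
  congr 3
  ext u
  simp [and_comm]

theorem Embedding.image_inter_neighborSet {H : SimpleGraph V'} (f : G ↪g H) (S : Set V) (v : V) :
    f '' S ∩ H.neighborSet (f v) = f '' (S ∩ G.neighborSet v) := by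
  ext u
  constructor
  · rintro ⟨⟨x, hx, rfl⟩, hadj⟩
    exact ⟨x, ⟨hx, f.map_adj_iff.1 hadj⟩, rfl⟩
  · rintro ⟨x, ⟨hx, hadj⟩, rfl⟩
    exact ⟨⟨x, hx, rfl⟩, f.map_adj_iff.2 hadj⟩

theorem Embedding.ncard_image_inter_neighborSet {H : SimpleGraph V'} (f : G ↪g H) (S : Set V)
    (v : V) : (f '' S ∩ H.neighborSet (f v)).ncard = (S ∩ G.neighborSet v).ncard := by
  rw [f.image_inter_neighborSet, Set.ncard_image_of_injective _ f.injective]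

theorem Embedding.isOddSet_image_iff {H : SimpleGraph V'} (f : G ↪g H) {S : Set V} :
    H.IsOddSet (f '' S) ↔ G.IsOddSet S := by
  simp only [IsOddSet, Set.forall_mem_image, f.ncard_image_inter_neighborSet]

theorem Embedding.isEvenSet_image_iff {H : SimpleGraph V'} (f : G ↪g H) {S : Set V} :
    H.IsEvenSet_s0 (f '' S) ↔ G.IsEvenSet_s0 S := by
  simp only [IsEvenSet_s0, Set.forall_mem_image, f.ncard_image_inter_neighborSet]

theorem isOddSet_univ_iff [Fintype V] [DecidableRel G.Adj] :
    G.IsOddSet Set.univ ↔ ∀ v, Odd (G.degree v) := by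
  simp [IsOddSet, ncard_neighborSet]

theorem IsOddSet.even_ncard [Finite V] {S : Set V} (hS : G.IsOddSet S) : Even S.ncard := by
  classical
  have := Fintype.ofFinite S
  have himage : Embedding.induce (G := G) S '' Set.univ = S := by
    rw [Set.image_univ]
    exact Subtype.range_coe
  rw [← himage, (Embedding.induce S).isOddSet_image_iff, isOddSet_univ_iff] at hS
  have := (G.induce S).even_card_odd_degree_vertices
  simp only [hS, Finset.filter_true, Finset.card_univ] at this
  rwa [Set.ncard_eq_toFinset_card', Set.toFinset_card]

/-- Gallai's theorem. With `A` the adjacency matrix over `𝔽₂` and `d = 1 ᵥ* A` the degree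
vector, the even part is the support of a solution of `x (A + diag (d + 1)) = d + 1`. -/
theorem exists_isEvenSet_isOddSet_compl [Finite V] (G : SimpleGraph V) :
    ∃ S : Set V, G.IsEvenSet_s0 S ∧ G.IsOddSet Sᶜ := by
  classical
  have := Fintype.ofFinite V
  set A := G.adjMatrix (ZMod 2)
  set d := (1 : V → ZMod 2) ᵥ* A
  have hM : (A + diagonal (d + 1)).IsSymm := G.isSymm_adjMatrix.add (isSymm_diagonal _)
  obtain ⟨x, hx⟩ := hM.exists_vecMul_eq_diag
  rw [diag_add, diag_adjMatrix, diag_diagonal, zero_add, vecMul_add] at hx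
  have hxv : ∀ v, (x ᵥ* A) v + x v * (d v + 1) = d v + 1 := fun v => by
    simpa [vecMul_diagonal] using congrFun hx v
  set S := {v | x v = 1}
  have hxS : x = S.indicator 1 := ZMod.eq_indicator_setOf_eq_one x
  refine ⟨S, fun v hv => ?_, fun v hv => ?_⟩
  · have := hxv v
    rw [show x v = 1 from hv, one_mul, add_eq_right, hxS, adjMatrix_vecMul_indicator_apply] at this
    exact ZMod.natCast_eq_zero_iff_even.mp this
  · have := hxv v
    rw [hxS, Set.indicator_of_notMem hv, zero_mul, add_zero] at this
    have h := G.adjMatrix_vecMul_indicator_apply (R := ZMod 2) Sᶜ v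
    rw [Set.indicator_compl, sub_vecMul, Pi.sub_apply, this, sub_add_cancel_left] at h
    exact ZMod.natCast_eq_one_iff_odd.mp (h.symm.trans (by decide))

theorem exists_isEvenSet_isOddSet_diff [Finite V] (G : SimpleGraph V) (W : Set V) :
    ∃ S ⊆ W, G.IsEvenSet_s0 S ∧ G.IsOddSet (W \ S) := by
  obtain ⟨S, hS, hSc⟩ := (G.induce W).exists_isEvenSet_isOddSet_compl
  have hodd := (Embedding.induce (G := G) W).isOddSet_image_iff.2 hSc
  rw [show ⇑(Embedding.induce (G := G) W) = Subtype.val from rfl, Set.image_val_compl] at hodd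
  exact ⟨Subtype.val '' S, Subtype.coe_image_subset W S,
    (Embedding.induce W).isEvenSet_image_iff.2 hS, hodd⟩

theorem exists_isEvenSet_odd_ncard_isOddSet [Finite V] (G : SimpleGraph V) {W : Set V}
    (hW : W.Nonempty) : ∃ X ⊆ W, ∃ Y ⊆ W, G.IsEvenSet_s0 X ∧ Odd X.ncard ∧ G.IsOddSet Y ∧
      W.ncard ≤ X.ncard + Y.ncard + 1 := by
  obtain ⟨W', hW'W, hodd, hcard⟩ := Set.exists_subset_odd_ncard hW (Set.toFinite W)
  obtain ⟨X, hXW', hX, hY⟩ := G.exists_isEvenSet_isOddSet_diff W'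
  have hsum := Set.ncard_sdiff_add_ncard_of_subset hXW'
  refine ⟨X, hXW'.trans hW'W, W' \ X, Set.sdiff_subset.trans hW'W, hX, ?_, hY, by omega⟩
  rw [← hsum] at hodd
  exact (Nat.odd_add'.mp hodd).2 hY.even_ncard

section Join

variable {A B : Set V}

theorem disjoint_of_forall_adj (hAB : ∀ a ∈ A, ∀ b ∈ B, G.Adj a b) : Disjoint A B :=
  Set.disjoint_left.2 fun v hA hB => G.irrefl (hAB v hA v hB)

variable [Finite V]

theorem ncard_union_of_forall_adj (hAB : ∀ a ∈ A, ∀ b ∈ B, G.Adj a b) :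
    (A ∪ B).ncard = A.ncard + B.ncard :=
  Set.ncard_union_eq (disjoint_of_forall_adj hAB)

theorem ncard_union_inter_neighborSet_of_forall_adj (hAB : ∀ a ∈ A, ∀ b ∈ B, G.Adj a b)
    {v : V} (hv : v ∈ A) :
    ((A ∪ B) ∩ G.neighborSet v).ncard = (A ∩ G.neighborSet v).ncard + B.ncard := by
  have hB : B ⊆ G.neighborSet v := fun b hb => hAB v hv b hb
  rw [Set.union_inter_distrib_right, Set.inter_eq_left.2 hB,
    Set.ncard_union_eq ((disjoint_of_forall_adj hAB).mono_left Set.inter_subset_left)]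

theorem isOddSet_union_of_forall_adj (hAB : ∀ a ∈ A, ∀ b ∈ B, G.Adj a b)
    (hA : ∀ v ∈ A, Odd ((A ∩ G.neighborSet v).ncard + B.ncard))
    (hB : ∀ v ∈ B, Odd ((B ∩ G.neighborSet v).ncard + A.ncard)) : G.IsOddSet (A ∪ B) := by
  rintro v (hv | hv)
  · rw [ncard_union_inter_neighborSet_of_forall_adj hAB hv]
    exact hA v hv
  · rw [Set.union_comm, ncard_union_inter_neighborSet_of_forall_adj
      (fun b hb a ha => (hAB a ha b hb).symm) hv]
    exact hB v hv

theorem IsEvenSet_s0.isOddSet_union (hA : G.IsEvenSet_s0 A) (hB : G.IsEvenSet_s0 B) (hA' : Odd A.ncard)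
    (hB' : Odd B.ncard) (hAB : ∀ a ∈ A, ∀ b ∈ B, G.Adj a b) : G.IsOddSet (A ∪ B) :=
  isOddSet_union_of_forall_adj hAB (fun v hv => (hA v hv).add_odd hB')
    (fun v hv => (hB v hv).add_odd hA')

theorem IsOddSet.union_of_forall_adj (hA : G.IsOddSet A) (hB : G.IsOddSet B)
    (hAB : ∀ a ∈ A, ∀ b ∈ B, G.Adj a b) : G.IsOddSet (A ∪ B) :=
  isOddSet_union_of_forall_adj hAB (fun v hv => (hA v hv).add_even hB.even_ncard)
    (fun v hv => (hB v hv).add_even hA.even_ncard)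

end Join

end SimpleGraph

theorem stmt0_general {V : Type*} [Fintype V] (G : SimpleGraph V)
    (V1 V2 : Set V) (h1 : V1.Nonempty) (h2 : V2.Nonempty)
    (hcover : V1 ∪ V2 = Set.univ)
    (hjoin : ∀ u ∈ V1, ∀ w ∈ V2, G.Adj u w) :
    ∃ S : Set V, G.IsOddSet S ∧
      2 * ⌈((Fintype.card V : ℚ) - 2) / 4⌉ ≤ (S.ncard : ℤ) := by
  obtain ⟨X1, hX1, Y1, hY1, hX1e, hX1o, hY1o, hcard1⟩ :=
    G.exists_isEvenSet_odd_ncard_isOddSet h1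
  obtain ⟨X2, hX2, Y2, hY2, hX2e, hX2o, hY2o, hcard2⟩ :=
    G.exists_isEvenSet_odd_ncard_isOddSet h2
  have hXadj : ∀ a ∈ X1, ∀ b ∈ X2, G.Adj a b := fun a ha b hb => hjoin a (hX1 ha) b (hX2 hb)
  have hYadj : ∀ a ∈ Y1, ∀ b ∈ Y2, G.Adj a b := fun a ha b hb => hjoin a (hY1 ha) b (hY2 hb)
  have hn : Fintype.card V ≤ V1.ncard + V2.ncard := by
    rw [← Nat.card_eq_fintype_card, ← Set.ncard_univ, ← hcover]
    exact Set.ncard_union_le V1 V2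
  rcases le_total (X1.ncard + X2.ncard) (Y1.ncard + Y2.ncard) with h | h
  · refine ⟨Y1 ∪ Y2, hY1o.union_of_forall_adj hY2o hYadj, ?_⟩
    rw [SimpleGraph.ncard_union_of_forall_adj hYadj]
    exact two_mul_ceil_sub_two_div_four_le (hY1o.even_ncard.add hY2o.even_ncard) (by omega)
  · refine ⟨X1 ∪ X2, hX1e.isOddSet_union hX2e hX1o hX2o hXadj, ?_⟩
    rw [SimpleGraph.ncard_union_of_forall_adj hXadj]
    exact two_mul_ceil_sub_two_div_four_le (hX1o.add_odd hX2o) (by omega)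

/-- If a finite graph `G` on `n` vertices admits a join, then it contains an odd set of
size at least `2 * ⌈(n - 2) / 4⌉`. -/
theorem stmt0 {V : Type*} [Fintype V] (G : SimpleGraph V)
    (V1 V2 : Set V) (h1 : V1.Nonempty) (h2 : V2.Nonempty)
    (hdisj : Disjoint V1 V2) (hcover : V1 ∪ V2 = Set.univ)
    (hjoin : ∀ u ∈ V1, ∀ w ∈ V2, G.Adj u w) :
    ∃ S : Set V, G.IsOddSet S ∧
      2 * ⌈((Fintype.card V : ℚ) - 2) / 4⌉ ≤ (S.ncard : ℤ) :=
  stmt0_general G V1 V2 h1 h2 hcover hjoin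
end

section
/- Let G be a finite simple graph that is P4-free (i.e., G contains no four distinct vertices a, b, c, d such that ab, bc, cd are edges and ac, ad, bd are non-edges) and in which every connected component has an even number of vertices. Then V(G) can be partitioned into three (possibly empty) odd sets; in particular the odd chromatic number of G is at most 3. -/
open Set

namespace SimpleGraph

variable {V : Type*} {G : SimpleGraph V} {U S T : Set V}

def IsP4Free (G : SimpleGraph V) : Prop :=
  ∀ ⦃a b c d : V⦄, G.Adj a b → G.Adj b c → G.Adj c d → G.Adj a c ∨ G.Adj b d ∨ G.Adj a d

theorem IsP4Free.compl (hG : G.IsP4Free) : Gᶜ.IsP4Free := by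
  intro a b c d hab hbc hcd
  by_contra! h
  obtain ⟨hac, hbd, had⟩ := h
  have adj_of {x y : V} (hne : x ≠ y) (h : ¬Gᶜ.Adj x y) : G.Adj x y :=
    not_not.1 fun hn => h ((compl_adj G x y).2 ⟨hne, hn⟩)
  have hca := (adj_of (by rintro rfl; exact had hcd) hac).symm
  have had' := adj_of (by rintro rfl; exact hac hcd.symm) had
  have hdb := (adj_of (by rintro rfl; exact had hab) hbd).symm
  rcases hG hca had' hdb with h | h | h
  exacts [hcd.2 h, hab.2 h, hbc.2 h.symm]

theorem IsCompleteBetween.mono {S' T' : Set V} (h : G.IsCompleteBetween S T) (hS : S' ⊆ S)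
    (hT : T' ⊆ T) : G.IsCompleteBetween S' T' :=
  fun _ ha _ hb => h (hS ha) (hT hb)

theorem not_adj_of_compl_isCompleteBetween {a b : V} (h : Gᶜ.IsCompleteBetween S T) (ha : a ∈ S)
    (hb : b ∈ T) : ¬G.Adj a b :=
  ((compl_adj G a b).1 (h ha hb)).2

structure IsJoinOrUnion (G : SimpleGraph V) (U S T : Set V) : Prop where
  union_eq : S ∪ T = U
  left_nonempty : S.Nonempty
  right_nonempty : T.Nonempty
  isCompleteBetween_or : G.IsCompleteBetween S T ∨ Gᶜ.IsCompleteBetween S T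

theorem IsJoinOrUnion.disjoint (h : G.IsJoinOrUnion U S T) : Disjoint S T := by
  rcases h.isCompleteBetween_or with h | h <;> exact h.disjoint

theorem IsJoinOrUnion.compl (h : G.IsJoinOrUnion U S T) : Gᶜ.IsJoinOrUnion U S T :=
  ⟨h.union_eq, h.left_nonempty, h.right_nonempty, by
    rw [compl_compl]
    exact h.isCompleteBetween_or.symm⟩

theorem isJoinOrUnion_pair (G : SimpleGraph V) {v w : V} (hvw : v ≠ w) :
    ∃ S T, G.IsJoinOrUnion {v, w} S T := by
  refine ⟨{v}, {w}, singleton_union, singleton_nonempty v, singleton_nonempty w, ?_⟩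
  by_cases hadj : G.Adj v w
  · exact Or.inl <| by simpa [IsCompleteBetween] using hadj
  · exact Or.inr <| by simpa [IsCompleteBetween] using And.intro hvw hadj

section Insert

variable {v x : V}

/-- An edge from a non-neighbour of `v` in `S` to a neighbour of `v` in `S` would extend through
`v` and `t` to an induced `P₄`. -/
theorem IsP4Free.isJoinOrUnion_insert_of_adj {t : V} (hG : G.IsP4Free)
    (hST : Gᶜ.IsCompleteBetween S T) (hvS : v ∉ S) (hx : x ∈ S) (hvx : ¬G.Adj v x) (ht : t ∈ T)
    (hvt : G.Adj v t) :
    G.IsJoinOrUnion (insert v (S ∪ T)) {y ∈ S | ¬G.Adj v y}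
      (insert v ({y ∈ S | G.Adj v y} ∪ T)) := by
  refine ⟨?_, ⟨x, hx, hvx⟩, insert_nonempty _ _, Or.inr ?_⟩
  · ext y
    by_cases hvy : G.Adj v y <;> simp [hvy]
  rintro y ⟨hy, hvy⟩ z hz
  rw [compl_adj]
  rcases hz with rfl | ⟨hz, hvz⟩ | hz
  · exact ⟨ne_of_mem_of_not_mem hy hvS, fun h => hvy h.symm⟩
  · refine ⟨by rintro rfl; exact hvy hvz, fun hyz => ?_⟩
    rcases hG hyz hvz.symm hvt with h | h | h
    exacts [hvy h.symm, not_adj_of_compl_isCompleteBetween hST hz ht h,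
      not_adj_of_compl_isCompleteBetween hST hy ht h]
  · exact hST hy hz

theorem IsP4Free.exists_isJoinOrUnion_insert_of_compl (hG : G.IsP4Free)
    (hST : Gᶜ.IsCompleteBetween S T) (hS : S.Nonempty) (hT : T.Nonempty) (hv : v ∉ S ∪ T) :
    ∃ S' T', G.IsJoinOrUnion (insert v (S ∪ T)) S' T' := by
  by_cases hall : ∀ u ∈ S ∪ T, G.Adj v u
  · exact ⟨{v}, S ∪ T, singleton_union, singleton_nonempty v, hS.mono subset_union_left,
      Or.inl fun _ hv' u hu => (mem_singleton_iff.1 hv') ▸ hall u hu⟩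
  push Not at hall
  obtain ⟨x, hx, hvx⟩ := hall
  wlog hxS : x ∈ S generalizing S T
  · rw [union_comm] at hv ⊢
    have hxT : x ∈ T := hx.resolve_left hxS
    exact this hST.symm hT hS hv (mem_union_left _ hxT) hxT
  have hvS : v ∉ S := fun h => hv (mem_union_left _ h)
  by_cases hN : ∃ t ∈ T, G.Adj v t
  · obtain ⟨t, ht, hvt⟩ := hN
    exact ⟨_, _, hG.isJoinOrUnion_insert_of_adj hST hvS hxS hvx ht hvt⟩
  push Not at hN
  refine ⟨insert v S, T, insert_union, insert_nonempty v S, hT, Or.inr ?_⟩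
  rintro a (rfl | ha) b hb
  · exact (compl_adj G _ b).2 ⟨by rintro rfl; exact hv (mem_union_right _ hb), hN b hb⟩
  · exact hST ha hb

theorem IsP4Free.exists_isJoinOrUnion_insert (hG : G.IsP4Free) (h : G.IsJoinOrUnion U S T)
    (hv : v ∉ U) : ∃ S' T', G.IsJoinOrUnion (insert v U) S' T' := by
  rw [← h.union_eq] at hv ⊢
  rcases h.isCompleteBetween_or with hc | hc
  · obtain ⟨S', T', h'⟩ := hG.compl.exists_isJoinOrUnion_insert_of_compl
      (by rwa [compl_compl]) h.left_nonempty h.right_nonempty hv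
    exact ⟨S', T', by simpa using h'.compl⟩
  · exact hG.exists_isJoinOrUnion_insert_of_compl hc h.left_nonempty h.right_nonempty hv

end Insert

/-- Seinsche's theorem. -/
theorem IsP4Free.exists_isJoinOrUnion [Finite V] (hG : G.IsP4Free) (hU : U.Nontrivial) :
    ∃ S T, G.IsJoinOrUnion U S T := by
  induction U, U.toFinite using Set.Finite.induction_on with
  | empty => exact absurd hU not_nontrivial_empty
  | @insert v U hv _ ih =>
    rcases U.subsingleton_or_nontrivial with hsub | hnt
    · rcases hsub.eq_empty_or_singleton with rfl | ⟨w, rfl⟩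
      · exact absurd hU (by simp)
      · exact isJoinOrUnion_pair G fun h => hv (h ▸ rfl)
    · obtain ⟨S, T, h⟩ := ih hnt
      exact hG.exists_isJoinOrUnion_insert h hv

section Parity

variable {ι : Type*} {A B : Set V} {v : V}

def HasParity (G : SimpleGraph V) (A : Set V) (ε p : ZMod 2) : Prop :=
  (∀ v ∈ A, ((A ∩ G.neighborSet v).ncard : ZMod 2) = ε) ∧ (A.ncard : ZMod 2) = p

theorem HasParity.isOddSet {p : ZMod 2} (h : G.HasParity A 1 p) : G.IsOddSet A :=
  fun v hv => ZMod.natCast_eq_one_iff_odd.1 (h.1 v hv)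

theorem hasParity_empty (ε : ZMod 2) : G.HasParity ∅ ε 0 :=
  ⟨fun _ hv => hv.elim, by simp⟩

theorem hasParity_singleton (v : V) : G.HasParity {v} 0 1 :=
  ⟨fun w hw => by simp [mem_singleton_iff.1 hw], by simp⟩

theorem union_inter_neighborSet_of_compl (h : Gᶜ.IsCompleteBetween A B) (hv : v ∈ A) :
    (A ∪ B) ∩ G.neighborSet v = A ∩ G.neighborSet v := by
  ext w
  simp only [mem_inter_iff, mem_union, mem_neighborSet]
  exact ⟨fun ⟨hw, hvw⟩ =>
      ⟨hw.resolve_right fun hwB => not_adj_of_compl_isCompleteBetween h hv hwB hvw, hvw⟩,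
    fun ⟨hw, hvw⟩ => ⟨Or.inl hw, hvw⟩⟩

theorem union_inter_neighborSet_of_isCompleteBetween (h : G.IsCompleteBetween A B)
    (hv : v ∈ A) :
    (A ∪ B) ∩ G.neighborSet v = A ∩ G.neighborSet v ∪ B := by
  ext w
  simp only [mem_inter_iff, mem_union, mem_neighborSet]
  exact ⟨fun ⟨hw, hvw⟩ => hw.imp_left (⟨·, hvw⟩),
    fun hw => hw.elim (fun ⟨hw, hvw⟩ => ⟨Or.inl hw, hvw⟩) fun hw => ⟨Or.inr hw, h hv hw⟩⟩

theorem natCast_ncard_union [Finite V] (h : Disjoint A B) :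
    ((A ∪ B).ncard : ZMod 2) = A.ncard + B.ncard := by
  rw [ncard_union_eq h, Nat.cast_add]

theorem HasParity.union_of_compl [Finite V] {ε p q : ZMod 2} (h : Gᶜ.IsCompleteBetween A B)
    (hA : G.HasParity A ε p) (hB : G.HasParity B ε q) : G.HasParity (A ∪ B) ε (p + q) := by
  refine ⟨fun v hv => ?_, by rw [natCast_ncard_union h.disjoint, hA.2, hB.2]⟩
  rcases hv with hv | hv
  · rw [union_inter_neighborSet_of_compl h hv]
    exact hA.1 v hv
  · rw [union_comm, union_inter_neighborSet_of_compl h.symm hv]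
    exact hB.1 v hv

theorem HasParity.union_of_isCompleteBetween [Finite V] {ε₁ ε₂ p q : ZMod 2}
    (h : G.IsCompleteBetween A B) (hA : G.HasParity A ε₁ p) (hB : G.HasParity B ε₂ q)
    (hε : ε₁ + q = ε₂ + p) : G.HasParity (A ∪ B) (ε₁ + q) (p + q) := by
  refine ⟨fun v hv => ?_, by rw [natCast_ncard_union h.disjoint, hA.2, hB.2]⟩
  rcases hv with hv | hv
  · rw [union_inter_neighborSet_of_isCompleteBetween h hv,
      natCast_ncard_union (h.disjoint.mono_left inter_subset_left), hA.1 v hv, hB.2]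
  · rw [union_comm, union_inter_neighborSet_of_isCompleteBetween h.symm hv,
      natCast_ncard_union (h.symm.disjoint.mono_left inter_subset_left), hB.1 v hv, hA.2, hε]

def IsParityColoring (G : SimpleGraph V) (U : Set V) (c : V → ι) (ε p : ι → ZMod 2) : Prop :=
  ∀ i, G.HasParity (U ∩ c ⁻¹' {i}) (ε i) (p i)

theorem isParityColoring_singleton [DecidableEq ι] (v : V) {i : ι} {ε : ι → ZMod 2}
    (hε : ε i = 0) : G.IsParityColoring {v} (fun _ => i) ε (Pi.single i 1) := by
  intro j
  rcases eq_or_ne j i with rfl | hji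
  · simpa [hε] using hasParity_singleton (G := G) v
  · simpa [hji, Ne.symm hji] using hasParity_empty (G := G) (ε j)

variable {c₁ c₂ : V → ι} [DecidablePred (· ∈ S)]

theorem union_inter_preimage_piecewise (hd : Disjoint S T) (X : Set ι) :
    (S ∪ T) ∩ S.piecewise c₁ c₂ ⁻¹' X = S ∩ c₁ ⁻¹' X ∪ T ∩ c₂ ⁻¹' X := by
  ext v
  by_cases hv : v ∈ S
  · simp [hv, hd.notMem_of_mem_left hv]
  · simp [hv]

theorem IsParityColoring.union_of_compl [Finite V] {ε p q : ι → ZMod 2}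
    (h : Gᶜ.IsCompleteBetween S T) (h₁ : G.IsParityColoring S c₁ ε p)
    (h₂ : G.IsParityColoring T c₂ ε q) :
    G.IsParityColoring (S ∪ T) (S.piecewise c₁ c₂) ε (p + q) := fun i => by
  rw [union_inter_preimage_piecewise h.disjoint]
  exact (h₁ i).union_of_compl (h.mono inter_subset_left inter_subset_left) (h₂ i)

theorem IsParityColoring.union_of_isCompleteBetween [Finite V] {ε₁ ε₂ p q : ι → ZMod 2}
    (h : G.IsCompleteBetween S T) (h₁ : G.IsParityColoring S c₁ ε₁ p)
    (h₂ : G.IsParityColoring T c₂ ε₂ q) (hε : ε₁ + q = ε₂ + p) :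
    G.IsParityColoring (S ∪ T) (S.piecewise c₁ c₂) (ε₁ + q) (p + q) := fun i => by
  rw [union_inter_preimage_piecewise h.disjoint]
  exact (h₁ i).union_of_isCompleteBetween (h.mono inter_subset_left inter_subset_left) (h₂ i)
    (congrFun hε i)

end Parity

/-- A class of odd degrees has even size by the handshake lemma, and a single vertex cannot be
split into three classes of the same parities. -/
def IsAdmissibleParity (ε p : Fin 3 → ZMod 2) : Prop :=
  (∀ i, ¬(ε i = 1 ∧ p i = 1)) ∧ ∃ i j, ε i ≠ ε j ∨ p i ≠ p j

instance (ε p : Fin 3 → ZMod 2) : Decidable (IsAdmissibleParity ε p) :=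
  inferInstanceAs (Decidable (_ ∧ _))

namespace IsAdmissibleParity

variable {ε p : Fin 3 → ZMod 2}

theorem exists_eq_single (h : IsAdmissibleParity ε p) (hp : ∑ i, p i = 1) :
    ∃ i, ε i = 0 ∧ p = Pi.single i 1 := by
  revert ε p
  decide +kernel

theorem exists_union_split (h : IsAdmissibleParity ε p) (s : ZMod 2) :
    ∃ q, ∑ i, q i = s ∧ IsAdmissibleParity ε q ∧ IsAdmissibleParity ε (p - q) := by
  revert ε p s
  decide +kernel

theorem exists_join_split (h : IsAdmissibleParity ε p) (s : ZMod 2) :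
    ∃ q, ∑ i, q i = s ∧
      IsAdmissibleParity (ε - (p - q)) q ∧ IsAdmissibleParity (ε - q) (p - q) := by
  revert ε p s
  decide +kernel

end IsAdmissibleParity

theorem IsP4Free.exists_isParityColoring [Finite V] (hG : G.IsP4Free) {U : Set V}
    (hU : U.Nonempty) {ε p : Fin 3 → ZMod 2} (hadm : IsAdmissibleParity ε p)
    (hsum : ∑ i, p i = U.ncard) : ∃ c : V → Fin 3, G.IsParityColoring U c ε p := by
  induction U using WellFoundedLT.induction generalizing ε p with | _ U ih
  rcases hU.exists_eq_singleton_or_nontrivial with ⟨v, rfl⟩ | hU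
  · rw [ncard_singleton, Nat.cast_one] at hsum
    obtain ⟨i, hεi, rfl⟩ := hadm.exists_eq_single hsum
    exact ⟨fun _ => i, isParityColoring_singleton v hεi⟩
  obtain ⟨S, T, hsplit⟩ := hG.exists_isJoinOrUnion hU
  obtain rfl := hsplit.union_eq
  have hST := hsplit.disjoint
  have hS : S < S ∪ T := ssubset_union_left_iff.2 fun h =>
    hsplit.right_nonempty.elim fun t ht => hST.notMem_of_mem_left (h ht) ht
  have hT : T < S ∪ T := ssubset_union_right_iff.2 fun h =>
    hsplit.left_nonempty.elim fun s hs => hST.notMem_of_mem_right (h hs) hs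
  have hsumT {q : Fin 3 → ZMod 2} (hq : ∑ i, q i = S.ncard) : ∑ i, (p - q) i = T.ncard := by
    simp only [Pi.sub_apply, Finset.sum_sub_distrib, hsum, hq, natCast_ncard_union hST,
      add_sub_cancel_left]
  classical
  rcases hsplit.isCompleteBetween_or with hjoin | hunion
  · obtain ⟨q, hq, hadmS, hadmT⟩ := hadm.exists_join_split S.ncard
    obtain ⟨c₁, hc₁⟩ := ih S hS hsplit.left_nonempty hadmS hq
    obtain ⟨c₂, hc₂⟩ := ih T hT hsplit.right_nonempty hadmT (hsumT hq)
    refine ⟨S.piecewise c₁ c₂, ?_⟩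
    simpa using hc₁.union_of_isCompleteBetween hjoin hc₂ (by abel)
  · obtain ⟨q, hq, hadmS, hadmT⟩ := hadm.exists_union_split S.ncard
    obtain ⟨c₁, hc₁⟩ := ih S hS hsplit.left_nonempty hadmS hq
    obtain ⟨c₂, hc₂⟩ := ih T hT hsplit.right_nonempty hadmT (hsumT hq)
    refine ⟨S.piecewise c₁ c₂, ?_⟩
    simpa using hc₁.union_of_compl hunion hc₂

theorem ConnectedComponent.isCompleteBetween_of_isJoinOrUnion {K : G.ConnectedComponent}
    (h : G.IsJoinOrUnion K.supp S T) : G.IsCompleteBetween S T := by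
  refine h.isCompleteBetween_or.resolve_right fun hc => ?_
  have mem_supp {v : V} (hv : v ∈ S ∪ T) : G.connectedComponentMk v = K := by
    rwa [h.union_eq] at hv
  obtain ⟨s, hs⟩ := h.left_nonempty
  obtain ⟨t, ht⟩ := h.right_nonempty
  obtain ⟨p⟩ : G.Reachable s t := ConnectedComponent.exact <|
    (mem_supp (mem_union_left T hs)).trans (mem_supp (mem_union_right S ht)).symm
  obtain ⟨d, -, hdS, hdS'⟩ := p.exists_boundary_dart S hs (hc.disjoint.notMem_of_mem_right ht)
  have hdK : d.snd ∈ S ∪ T := h.union_eq ▸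
    (ConnectedComponent.connectedComponentMk_eq_of_adj d.adj).symm.trans
      (mem_supp (mem_union_left T hdS))
  exact not_adj_of_compl_isCompleteBetween hc hdS (hdK.resolve_left hdS') d.adj

/-- Both sides of the join `S + T` get classes of size parities `p = (s, s + 1, s + 1)`,
`s = |S| mod 2`, and degree parities `1 - p`; across the join each degree parity becomes
`1 - p + p = 1`. -/
theorem IsP4Free.exists_forall_isOddSet_of_even [Finite V] (hG : G.IsP4Free)
    (K : G.ConnectedComponent) (hK : Even K.supp.ncard) :
    ∃ c : V → Fin 3, ∀ i, G.IsOddSet (K.supp ∩ c ⁻¹' {i}) := by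
  have hnt : K.supp.Nontrivial := K.nonempty_supp.exists_eq_singleton_or_nontrivial.resolve_left
    fun ⟨v, hv⟩ => Nat.not_even_one (by rwa [hv, ncard_singleton] at hK)
  obtain ⟨S, T, hsplit⟩ := hG.exists_isJoinOrUnion hnt
  set s : ZMod 2 := (S.ncard : ZMod 2)
  have hT : (T.ncard : ZMod 2) = s := by
    have h := natCast_ncard_union hsplit.disjoint
    rw [hsplit.union_eq, ZMod.natCast_eq_zero_iff_even.2 hK, eq_comm, CharTwo.add_eq_zero] at h
    exact h.symm
  have hparity : ∀ s : ZMod 2, IsAdmissibleParity (1 - ![s, s + 1, s + 1]) ![s, s + 1, s + 1] ∧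
      ∑ i, ![s, s + 1, s + 1] i = s := by
    decide +kernel
  obtain ⟨hadm, hsum⟩ := hparity s
  obtain ⟨c₁, hc₁⟩ := hG.exists_isParityColoring hsplit.left_nonempty hadm hsum
  obtain ⟨c₂, hc₂⟩ := hG.exists_isParityColoring hsplit.right_nonempty hadm (hsum.trans hT.symm)
  classical
  have hc := hc₁.union_of_isCompleteBetween
    (K.isCompleteBetween_of_isJoinOrUnion hsplit) hc₂ rfl
  rw [sub_add_cancel, hsplit.union_eq] at hc
  exact ⟨_, fun i => (hc i).isOddSet⟩

theorem exists_forall_isOddSet_preimage {ι : Type*}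
    (h : ∀ K : G.ConnectedComponent, ∃ c : V → ι, ∀ i, G.IsOddSet (K.supp ∩ c ⁻¹' {i})) :
    ∃ c : V → ι, ∀ i, G.IsOddSet (c ⁻¹' {i}) := by
  choose f hf using h
  refine ⟨fun v => f (G.connectedComponentMk v) v, fun i v hv => ?_⟩
  have hN : (fun v => f (G.connectedComponentMk v) v) ⁻¹' {i} ∩ G.neighborSet v =
      ((G.connectedComponentMk v).supp ∩ f (G.connectedComponentMk v) ⁻¹' {i}) ∩
        G.neighborSet v := by
    ext w
    simp only [mem_inter_iff, mem_preimage, mem_singleton_iff, mem_neighborSet,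
      ConnectedComponent.mem_supp_iff]
    constructor
    · rintro ⟨hw, hvw⟩
      rw [← ConnectedComponent.connectedComponentMk_eq_of_adj hvw] at hw
      exact ⟨⟨(ConnectedComponent.connectedComponentMk_eq_of_adj hvw).symm, hw⟩, hvw⟩
    · rintro ⟨⟨-, hw⟩, hvw⟩
      rw [← ConnectedComponent.connectedComponentMk_eq_of_adj hvw]
      exact ⟨hw, hvw⟩
  rw [hN]
  exact hf _ i v ⟨rfl, hv⟩

end SimpleGraph

/-- If a finite graph `G` is `P₄`-free and every connected component of `G` has an even
number of vertices, then `V(G)` can be partitioned into three (possibly empty) odd sets;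
in particular χ_odd(G) ≤ 3. -/
theorem stmt3 {V : Type*} [Fintype V] (G : SimpleGraph V)
    (hP4 : ∀ a b c d : V, a ≠ b → a ≠ c → a ≠ d → b ≠ c → b ≠ d → c ≠ d →
      G.Adj a b → G.Adj b c → G.Adj c d →
      ¬ G.Adj a c → ¬ G.Adj a d → ¬ G.Adj b d → False)
    (hcomp : ∀ K : G.ConnectedComponent, Even K.supp.ncard) :
    ∃ A B C : Set V, Disjoint A B ∧ Disjoint A C ∧ Disjoint B C ∧
      A ∪ B ∪ C = Set.univ ∧ G.IsOddSet A ∧ G.IsOddSet B ∧ G.IsOddSet C := by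
  have hG : G.IsP4Free := fun a b c d hab hbc hcd => by
    by_contra! h
    exact hP4 a b c d hab.ne (by rintro rfl; exact h.2.2 hcd) (by rintro rfl; exact h.1 hcd.symm)
      hbc.ne (by rintro rfl; exact h.2.2 hab) hcd.ne hab hbc hcd h.1 h.2.2 h.2.1
  obtain ⟨c, hc⟩ := SimpleGraph.exists_forall_isOddSet_preimage fun K =>
    hG.exists_forall_isOddSet_of_even K (hcomp K)
  refine ⟨c ⁻¹' {0}, c ⁻¹' {1}, c ⁻¹' {2}, ?_, ?_, ?_, ?_, hc 0, hc 1, hc 2⟩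
  · exact Disjoint.preimage c (by simp)
  · exact Disjoint.preimage c (by simp)
  · exact Disjoint.preimage c (by simp)
  · ext v
    simp only [mem_union, mem_preimage, mem_singleton_iff, mem_univ, iff_true]
    omega
end

section
/- Let G be a finite simple graph and let G• be its subdivision. If c is a coloring of V(G•) all of whose color classes are odd sets of G•, then for every edge uv of G the original vertices u and v receive different colors; that is, the restriction of c to V(G) is a proper coloring of G. -/
/-- The subdivision `G•` of a graph `G`: its vertices are the vertices of `G` together
with one new vertex for each edge of `G`, and a vertex `v` is adjacent to an edge-vertex
`e` iff `v` is an endpoint of `e`; there are no other adjacencies. -/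
def SimpleGraph.Subdiv {V : Type*} (G : SimpleGraph V) :
    SimpleGraph (V ⊕ G.edgeSet) where
  Adj a b :=
    (∃ (v : V) (e : G.edgeSet), a = Sum.inl v ∧ b = Sum.inr e ∧ v ∈ (e : Sym2 V)) ∨
    (∃ (v : V) (e : G.edgeSet), b = Sum.inl v ∧ a = Sum.inr e ∧ v ∈ (e : Sym2 V))
  symm := ⟨fun _ _ h => h.symm⟩
  loopless := by
    refine ⟨?_⟩
    rintro a (⟨v, e, h1, h2, _⟩ | ⟨v, e, h1, h2, _⟩) <;> rw [h1] at h2 <;>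
      exact absurd h2 (by simp)

/-- If `c` is a coloring of the vertices of the subdivision `G•` all of whose color
classes are odd sets of `G•`, then the endpoints of every edge of `G` receive different
colors; i.e. the restriction of `c` to `V(G)` is a proper coloring of `G`. -/
theorem stmt10 {V : Type*} [Fintype V] (G : SimpleGraph V)
    {C : Type*} (c : V ⊕ G.edgeSet → C)
    (hc : ∀ k : C, G.Subdiv.IsOddSet {x | c x = k}) :
    ∀ u v : V, G.Adj u v → c (Sum.inl u) ≠ c (Sum.inl v) := by
  intro u v huv heq
  have hne : u ≠ v := G.ne_of_adj huv
  set e : G.edgeSet := ⟨s(u, v), huv⟩ with he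
  set k := c (Sum.inr e) with hk
  have hN : G.Subdiv.neighborSet (Sum.inr e) = {Sum.inl u, Sum.inl v} := by
    ext x
    simp only [SimpleGraph.mem_neighborSet, SimpleGraph.Subdiv, Set.mem_insert_iff,
      Set.mem_singleton_iff]
    constructor
    · rintro (⟨w, f, h1, h2, h3⟩ | ⟨w, f, h1, h2, h3⟩)
      · exact absurd h1 (by simp)
      · obtain rfl := Sum.inr.inj h2.symm
        rw [he] at h3
        simp only [Sym2.mem_iff] at h3
        rcases h3 with rfl | rfl
        · exact Or.inl h1
        · exact Or.inr h1
    · rintro (rfl | rfl)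
      · exact Or.inr ⟨u, e, rfl, rfl, by rw [he]; simp⟩
      · exact Or.inr ⟨v, e, rfl, rfl, by rw [he]; simp⟩
  have key := hc k (Sum.inr e) rfl
  rw [hN] at key
  by_cases h : c (Sum.inl u) = k
  · have h' : c (Sum.inl v) = k := heq ▸ h
    have : {x | c x = k} ∩ {Sum.inl u, Sum.inl v} = {Sum.inl u, Sum.inl v} := by
      apply Set.inter_eq_self_of_subset_right
      rintro x (rfl | rfl) <;> simpa
    rw [this, Set.ncard_pair (by simpa using hne)] at key
    exact (Nat.not_odd_iff_even.2 (by norm_num)) key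
  · have h' : c (Sum.inl v) ≠ k := heq ▸ h
    have : {x | c x = k} ∩ ({Sum.inl u, Sum.inl v} : Set (V ⊕ G.edgeSet)) = ∅ := by
      ext x
      simp only [Set.mem_inter_iff, Set.mem_setOf_eq, Set.mem_insert_iff,
        Set.mem_singleton_iff, Set.mem_empty_iff_false, iff_false, not_and]
      rintro hx (rfl | rfl)
      · exact h hx
      · exact h' hx
    rw [this, Set.ncard_empty] at key
    exact (Nat.not_odd_iff_even.2 (by norm_num)) key
end

section
/- Let n ≥ 2 and let H_n be the graph whose vertex set consists of n 'clique' vertices together with one 'pair' vertex for each unordered pair of distinct clique vertices, where any two distinct clique vertices are adjacent, each pair vertex is adjacent exactly to the two clique vertices of its pair, and there are no other adjacencies. Then every coloring of V(H_n) all of whose color classes are odd sets is injective on the n clique vertices; consequently, every partition of V(H_n) into odd sets has at least n parts. -/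
/-- The graph `Hₙ`: its vertices are `n` "clique" vertices together with one "pair" vertex
for each unordered pair of distinct clique vertices; any two distinct clique vertices are
adjacent, each pair vertex is adjacent exactly to the two clique vertices of its pair, and
there are no other adjacencies. -/
def Hgraph (n : ℕ) :
    SimpleGraph (Fin n ⊕ {e : Sym2 (Fin n) // ¬ e.IsDiag}) where
  Adj a b :=
    (∃ i j : Fin n, a = Sum.inl i ∧ b = Sum.inl j ∧ i ≠ j) ∨
    (∃ (i : Fin n) (e : {e : Sym2 (Fin n) // ¬ e.IsDiag}),
      a = Sum.inl i ∧ b = Sum.inr e ∧ i ∈ e.val) ∨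
    (∃ (i : Fin n) (e : {e : Sym2 (Fin n) // ¬ e.IsDiag}),
      b = Sum.inl i ∧ a = Sum.inr e ∧ i ∈ e.val)
  symm := by
    constructor
    rintro a b (⟨i, j, h1, h2, h3⟩ | ⟨i, e, h1, h2, h3⟩ | ⟨i, e, h1, h2, h3⟩)
    · exact Or.inl ⟨j, i, h2, h1, h3.symm⟩
    · exact Or.inr (Or.inr ⟨i, e, h1, h2, h3⟩)
    · exact Or.inr (Or.inl ⟨i, e, h1, h2, h3⟩)
  loopless := by
    constructor
    rintro a (⟨i, j, h1, h2, h3⟩ | ⟨i, e, h1, h2, h3⟩ | ⟨i, e, h1, h2, h3⟩)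
    · rw [h1] at h2; exact h3 (Sum.inl.inj h2)
    · rw [h1] at h2; exact Sum.inl_ne_inr h2
    · rw [h1] at h2; exact Sum.inl_ne_inr h2

/-- For `n ≥ 2`, every coloring of `Hₙ` all of whose color classes are odd sets is
injective on the `n` clique vertices; consequently, every partition of the vertex set of
`Hₙ` into odd sets has at least `n` parts. -/
theorem stmt13 (n : ℕ) (hn : 2 ≤ n) {C : Type*} [Fintype C]
    (c : Fin n ⊕ {e : Sym2 (Fin n) // ¬ e.IsDiag} → C)
    (hc : ∀ k : C, (Hgraph n).IsOddSet {x | c x = k}) :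
    Function.Injective (fun i : Fin n => c (Sum.inl i)) ∧ n ≤ Fintype.card C := by

  have key : Function.Injective (fun i : Fin n => c (Sum.inl i)) := by
    intro i j hij
    by_contra hne
    simp only [] at hij
    have hd : ¬ (s(i, j) : Sym2 (Fin n)).IsDiag := by
      simp [Sym2.mk_isDiag_iff, hne]
    set e : {e : Sym2 (Fin n) // ¬ e.IsDiag} := ⟨s(i, j), hd⟩ with he
    have hN : (Hgraph n).neighborSet (Sum.inr e) =
        {Sum.inl i, Sum.inl j} := by
      ext x
      constructor
      · rintro (⟨a, b, h1, h2, h3⟩ | ⟨a, f, h1, h2, h3⟩ | ⟨a, f, h1, h2, h3⟩)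
        · exact absurd h1 (by simp)
        · exact absurd h1 (by simp)
        · have hf : f = e := by
            injection h2 with h2'
            exact h2'.symm
          subst hf
          have : a = i ∨ a = j := by
            simpa [he, Sym2.mem_iff] using h3
          rcases this with rfl | rfl
          · exact Or.inl h1
          · exact Or.inr h1
      · rintro (rfl | rfl)
        · exact Or.inr (Or.inr ⟨i, e, rfl, rfl, by simp [he]⟩)
        · exact Or.inr (Or.inr ⟨j, e, rfl, rfl, by simp [he]⟩)
    have hodd := hc (c (Sum.inr e)) (Sum.inr e) rfl
    rw [hN] at hodd
    have hij' : c (Sum.inl i) = c (Sum.inl j) := hij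
    by_cases hci : c (Sum.inl i) = c (Sum.inr e)
    · have hset : {x | c x = c (Sum.inr e)} ∩ ({Sum.inl i, Sum.inl j} :
          Set (Fin n ⊕ {e : Sym2 (Fin n) // ¬ e.IsDiag})) = {Sum.inl i, Sum.inl j} := by
        ext x
        simp only [Set.mem_inter_iff, Set.mem_setOf_eq, Set.mem_insert_iff,
          Set.mem_singleton_iff, and_iff_right_iff_imp]
        rintro (rfl | rfl)
        · exact hci
        · exact hij' ▸ hci
      rw [hset, Set.ncard_pair (by simp [hne])] at hodd
      exact (by decide : ¬ Odd 2) hodd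
    · have hset : {x | c x = c (Sum.inr e)} ∩ ({Sum.inl i, Sum.inl j} :
          Set (Fin n ⊕ {e : Sym2 (Fin n) // ¬ e.IsDiag})) = ∅ := by
        ext x
        simp only [Set.mem_inter_iff, Set.mem_setOf_eq, Set.mem_insert_iff,
          Set.mem_singleton_iff, Set.mem_empty_iff_false, iff_false, not_and]
        intro hx
        rintro (rfl | rfl)
        · exact hci hx
        · exact hci (hij'.trans hx)
      rw [hset, Set.ncard_empty] at hodd
      exact (by decide : ¬ Odd 0) hodd
  refine ⟨key, ?_⟩
  simpa using Fintype.card_le_of_injective _ key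
end

section
/- Let G be a finite simple graph, A ⊆ V(G), and H ⊆ V(G) an odd set of G. Let S = H ∩ A and let S* ⊆ A satisfy: (i) for every vertex v ∉ A, |N(v) ∩ S| and |N(v) ∩ S*| have the same parity; and (ii) for every vertex v ∈ S*, |N(v) ∩ S*| is even if and only if |N(v) ∩ (H \ A)| is odd. Then (H \ A) ∪ S* is an odd set of G. -/
lemma Set.ncard_inter_union_of_disjoint {α : Type*} [Finite α] (N : Set α) {X Y : Set α}
    (h : Disjoint X Y) : (N ∩ (X ∪ Y)).ncard = (N ∩ X).ncard + (N ∩ Y).ncard := by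
  rw [Set.inter_union_distrib_left,
    Set.ncard_union_eq (h.mono Set.inter_subset_right Set.inter_subset_right)]

lemma SimpleGraph.isOddSet_iff {V : Type*} (G : SimpleGraph V) (S : Set V) :
    G.IsOddSet S ↔ ∀ v ∈ S, Odd (G.neighborSet v ∩ S).ncard := by
  simp only [SimpleGraph.IsOddSet, Set.inter_comm]

/-- Exchange lemma for odd sets: if `H` is an odd set, `S = H ∩ A`, and `S* ⊆ A` has the
same neighborhood modulo 2 as `S` outside `A` and satisfies the parity condition (ii) on
its own vertices, then `(H \ A) ∪ S*` is again an odd set. -/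
theorem stmt14 {V : Type*} [Fintype V] (G : SimpleGraph V) (A H : Set V)
    (hH : G.IsOddSet H) (S Sstar : Set V) (hS : S = H ∩ A) (hSsub : Sstar ⊆ A)
    (hi : ∀ v ∉ A,
      (Odd ((G.neighborSet v) ∩ S).ncard ↔ Odd ((G.neighborSet v) ∩ Sstar).ncard))
    (hii : ∀ v ∈ Sstar,
      (Even ((G.neighborSet v) ∩ Sstar).ncard ↔ Odd ((G.neighborSet v) ∩ (H \ A)).ncard)) :
    G.IsOddSet ((H \ A) ∪ Sstar) := by
  subst hS
  rw [SimpleGraph.isOddSet_iff] at hH ⊢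
  intro v hv
  have hdisj : Disjoint (H \ A) Sstar := Set.disjoint_sdiff_left.mono_right hSsub
  rw [Set.ncard_inter_union_of_disjoint _ hdisj, Nat.odd_add]
  rcases hv with hvHA | hvS
  · have hHv := hH v hvHA.1
    rw [← Set.inter_union_sdiff H A,
      Set.ncard_inter_union_of_disjoint _ Set.disjoint_sdiff_inter.symm, Nat.odd_add',
      ← Nat.not_odd_iff_even, hi v hvHA.2, Nat.not_odd_iff_even] at hHv
    exact hHv
  · exact (hii v hvS).symm
end

section
/- Let G be a finite simple graph, A ⊆ V(G), and H ⊆ V(G) an even set of G. Let S = H ∩ A and let S* ⊆ A satisfy: (i) for every vertex v ∉ A, |N(v) ∩ S| and |N(v) ∩ S*| have the same parity; and (ii) for every vertex v ∈ S*, |N(v) ∩ S*| is odd if and only if |N(v) ∩ (H \ A)| is odd. Then (H \ A) ∪ S* is an even set of G. -/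
/-- A set `S` of vertices of `G` is *even* if every vertex of `S` has an even number of
neighbors inside `S`. -/
def SimpleGraph.IsEvenSet {V : Type*} (G : SimpleGraph V) (S : Set V) : Prop :=
  ∀ v ∈ S, Even (S ∩ G.neighborSet v).ncard

/-! For `v ∈ H \ A`, the evenness of `H` splits `|N(v) ∩ H|` as `|N(v) ∩ S| + |N(v) ∩ (H \ A)|`,
and condition (i) lets `S*` replace `S` in this parity count; for `v ∈ S*` the required parity
is exactly condition (ii). -/

theorem Set.even_ncard_union_iff {α : Type*} [Finite α] {s t : Set α} (h : Disjoint s t) :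
    Even (s ∪ t).ncard ↔ (Even s.ncard ↔ Even t.ncard) := by
  rw [Set.ncard_union_eq h, Nat.even_add]

theorem even_ncard_iff_of_odd_ncard_iff {α : Type*} {s t : Set α}
    (h : Odd s.ncard ↔ Odd t.ncard) : Even s.ncard ↔ Even t.ncard := by
  simpa only [← Nat.not_even_iff_odd, not_iff_not] using h

theorem Set.disjoint_inter_inter_diff_inter {α : Type*} (s t u : Set α) :
    Disjoint (s ∩ t ∩ u) (s \ t ∩ u) :=
  Set.disjoint_sdiff_inter.symm.mono Set.inter_subset_left Set.inter_subset_left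

/-- Exchange lemma for even sets: if `H` is an even set, `S = H ∩ A`, and `S* ⊆ A` has the
same neighborhood modulo 2 as `S` outside `A` and satisfies the parity condition (ii) on
its own vertices, then `(H \ A) ∪ S*` is again an even set. -/
theorem stmt15 {V : Type*} [Fintype V] (G : SimpleGraph V) (A H : Set V)
    (hH : G.IsEvenSet H) (S Sstar : Set V) (hS : S = H ∩ A) (hSsub : Sstar ⊆ A)
    (hi : ∀ v ∉ A,
      (Odd ((G.neighborSet v) ∩ S).ncard ↔ Odd ((G.neighborSet v) ∩ Sstar).ncard))
    (hii : ∀ v ∈ Sstar,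
      (Odd ((G.neighborSet v) ∩ Sstar).ncard ↔ Odd ((G.neighborSet v) ∩ (H \ A)).ncard)) :
    G.IsEvenSet ((H \ A) ∪ Sstar) := by
  subst hS
  intro v hv
  have hdisj : Disjoint (H \ A) Sstar := Set.disjoint_left.2 fun x hx hx' => hx.2 (hSsub hx')
  rw [Set.union_inter_distrib_right,
    Set.even_ncard_union_iff (hdisj.mono Set.inter_subset_left Set.inter_subset_left)]
  rcases hv with ⟨hvH, hvA⟩ | hvS
  · have hsplit := hH v hvH
    rw [← Set.inter_union_sdiff H A, Set.union_inter_distrib_right,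
      Set.even_ncard_union_iff (Set.disjoint_inter_inter_diff_inter H A _)] at hsplit
    have hiv := even_ncard_iff_of_odd_ncard_iff (hi v hvA)
    rw [Set.inter_comm, Set.inter_comm (G.neighborSet v)] at hiv
    tauto
  · have hiiv := even_ncard_iff_of_odd_ncard_iff (hii v hvS)
    rw [Set.inter_comm, Set.inter_comm (G.neighborSet v)] at hiiv
    tauto
end
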